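/- arXiv:2510.00926 — 3 statements merged into one kernel-verified Lean document; each statement's English description precedes it below -/
import Mathlib

section
/- Let p be an odd prime and let a, b, c ∈ ZMod p be such that D := 18abc − 4a³c + a²b² − 4b³ − 27c² is nonzero. Let n denote the number of elements x ∈ ZMod p with x³ + ax² + bx + c = 0. Then n ∈ {0, 1, 3}, and D is a square in ZMod p if and only if n ≠ 1 (equivalently, D is a non-square in ZMod p if and only if the cubic has exactly one root in ZMod p). -/
/-!
Over an algebraic closure `K` of a finite field `F` with `q` elements, a cubic with nonzero
discriminant `D` has three distinct roots `v 0, v 1, v 2`, and the Frobenius `x ↦ x ^ q` permutes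
them by some `π : Perm (Fin 3)`. Since the fixed points of the Frobenius are exactly `F`, the roots
lying in `F` correspond to the fixed points of `π`. The Vandermonde determinant `δ` of `v`
satisfies `D = (a² δ)²` and `δ ^ q = sign π • δ`; as `D` is a square in `F` iff `a² δ ∈ F`, and
`δ ≠ -δ` in odd characteristic, `D` is a square iff `π` is even. Finally, a permutation of three
letters has 0, 1 or 3 fixed points, and it is odd exactly when it has one.
-/

open Polynomial Equiv Finset

theorem Function.Injective.exists_perm_apply_eq {ι α : Type*} [Finite ι] {v : ι → α}
    (hv : Function.Injective v) {g : α → α} (hg : Function.Injective g)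
    (h : ∀ i, g (v i) ∈ Set.range v) : ∃ π : Perm ι, ∀ i, g (v i) = v (π i) := by
  choose f hf using h
  have hf_inj : Function.Injective f := fun i j hij => hv (hg (by rw [← hf, ← hf, hij]))
  exact ⟨Equiv.ofBijective f hf_inj.bijective_of_finite, fun i => (hf i).symm⟩

theorem Equiv.Perm.card_fixed_fin_three (π : Perm (Fin 3)) :
    #{i | π i = i} ∈ ({0, 1, 3} : Set ℕ) ∧ (sign π = 1 ↔ #{i | π i = i} ≠ 1) := by
  simp only [Set.mem_insert_iff, Set.mem_singleton_iff]
  revert π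
  decide

theorem Int.cast_units_mul_eq_self_iff {R : Type*} [Ring R] [NoZeroDivisors R] (h2 : (2 : R) ≠ 0)
    {x : R} (hx : x ≠ 0) (u : ℤˣ) : ((u : ℤ) : R) * x = x ↔ u = 1 := by
  rcases Int.units_eq_one_or u with rfl | rfl
  · simp
  · simp only [Units.val_neg, Units.val_one, Int.cast_neg, Int.cast_one, neg_mul, one_mul,
      neg_eq_iff_add_eq_zero, ← two_mul]
    simp [h2, hx]

theorem Matrix.det_vandermonde_comp_perm {R : Type*} [CommRing R] {n : ℕ} (v : Fin n → R)
    (π : Perm (Fin n)) : (vandermonde (v ∘ π)).det = Perm.sign π * (vandermonde v).det :=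
  det_permute π (vandermonde v)

namespace FiniteField

variable {F K : Type*} [Field F] [Fintype F] [Field K] [Algebra F K]

theorem pow_card_eq_self_iff_mem_range {x : K} :
    x ^ Fintype.card F = x ↔ x ∈ (algebraMap F K).range := by
  constructor
  · intro hx
    have hne : (X ^ Fintype.card F - X : F[X]) ≠ 0 :=
      X_pow_card_sub_X_ne_zero F Fintype.one_lt_card
    have hsplit : Splits (X ^ Fintype.card F - X : F[X]) := by
      rw [splits_iff_card_roots, roots_X_pow_card_sub_X,
        X_pow_card_sub_X_natDegree_eq F Fintype.one_lt_card]
      rfl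
    exact hsplit.mem_range_of_isRoot hne (by simp [hx])
  · rintro ⟨y, rfl⟩
    rw [← map_pow, pow_card]

theorem isSquare_iff_pow_card_eq_self {d : F} {δ : K} (hδ : algebraMap F K d = δ ^ 2) :
    IsSquare d ↔ δ ^ Fintype.card F = δ := by
  rw [pow_card_eq_self_iff_mem_range]
  constructor
  · rintro ⟨e, rfl⟩
    rw [map_mul, ← sq, eq_comm, sq_eq_sq_iff_eq_or_eq_neg] at hδ
    rcases hδ with rfl | rfl
    · exact ⟨e, rfl⟩
    · exact neg_mem ⟨e, rfl⟩
  · rintro ⟨e, rfl⟩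
    exact ⟨e, (algebraMap F K).injective (by rw [hδ, map_mul, sq])⟩

theorem card_roots_toFinset_eq_card_filter_aroots [DecidableEq F] [DecidableEq K] {f : F[X]}
    (hf : f ≠ 0) :
    #f.roots.toFinset = #{y ∈ (f.aroots K).toFinset | y ^ Fintype.card F = y} := by
  rw [← card_image_of_injective _ (algebraMap F K).injective]
  congr 1
  ext y
  simp only [mem_image, Multiset.mem_toFinset, mem_filter, mem_aroots, mem_roots hf, IsRoot.def,
    pow_card_eq_self_iff_mem_range, RingHom.mem_range]
  constructor
  · rintro ⟨x, hx, rfl⟩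
    exact ⟨⟨hf, by rw [aeval_algebraMap_apply_eq_algebraMap_eval, hx, map_zero]⟩, x, rfl⟩
  · rintro ⟨⟨-, hy⟩, x, rfl⟩
    exact ⟨x, (algebraMap F K).injective
      (by rwa [map_zero, ← aeval_algebraMap_apply_eq_algebraMap_eval]), rfl⟩

theorem isSquare_iff_sign_eq_one (hF : ringChar F ≠ 2) {n : ℕ} {v : Fin n → K}
    {π : Perm (Fin n)} (hπ : ∀ i, v i ^ Fintype.card F = v (π i)) {c d : F} (hd : d ≠ 0)
    (hdv : algebraMap F K d = (algebraMap F K c * (Matrix.vandermonde v).det) ^ 2) :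
    IsSquare d ↔ Perm.sign π = 1 := by
  set δ := algebraMap F K c * (Matrix.vandermonde v).det
  have hδ0 : δ ≠ 0 := by
    rintro h
    exact hd ((algebraMap F K).injective (by rw [hdv, h]; simp))
  have hσV : frobeniusAlgHom F K (Matrix.vandermonde v).det = (Matrix.vandermonde (v ∘ π)).det := by
    rw [AlgHom.map_det]
    congr 1
    ext i j
    simp [Matrix.vandermonde_apply, ← hπ, ← pow_mul, mul_comm]
  have hσδ : δ ^ Fintype.card F = Perm.sign π * δ := by
    change frobeniusAlgHom F K δ = _
    simp only [δ, map_mul, AlgHom.commutes, hσV, Matrix.det_vandermonde_comp_perm]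
    ring
  have h2 : (2 : K) ≠ 0 := by
    rw [← map_ofNat (algebraMap F K) 2]
    exact (_root_.map_ne_zero _).2 (Ring.two_ne_zero hF)
  rw [isSquare_iff_pow_card_eq_self hdv, hσδ, Int.cast_units_mul_eq_self_iff h2 hδ0]

end FiniteField

namespace Cubic

variable {F : Type*} [Field F] [Fintype F] [DecidableEq F]

theorem card_roots_mem_and_isSquare_discr_iff (hF : ringChar F ≠ 2) {P : Cubic F} (ha : P.a ≠ 0)
    (hD : P.discr ≠ 0) :
    #P.roots.toFinset ∈ ({0, 1, 3} : Set ℕ) ∧ (IsSquare P.discr ↔ #P.roots.toFinset ≠ 1) := by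
  classical
  let K := AlgebraicClosure F
  let σ := FiniteField.frobeniusAlgHom F K
  obtain ⟨r, s, t, h3⟩ :=
    (splits_iff_roots_eq_three (φ := algebraMap F K) ha).1 (IsAlgClosed.splits _)
  obtain ⟨hrs, hrt, hst⟩ := (discr_ne_zero_iff_roots_ne ha h3).1 hD
  let v : Fin 3 → K := ![r, s, t]
  have hv : Function.Injective v := by
    intro i j
    fin_cases i <;> fin_cases j <;> simp [v, hrs, hrt, hst, hrs.symm, hrt.symm, hst.symm]
  have hroots : (P.toPoly.aroots K).toFinset = univ.image v := by
    rw [aroots_def, ← map_roots, h3]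
    ext y
    simp [v, Fin.exists_fin_succ, eq_comm]
  have hmem : ∀ y, y ∈ Set.range v ↔ aeval y P.toPoly = 0 := fun y => by
    simpa [mem_aroots, ne_zero_of_a_ne_zero ha] using congrArg (y ∈ ·) hroots.symm
  obtain ⟨π, hπ⟩ : ∃ π : Perm (Fin 3), ∀ i, σ (v i) = v (π i) := by
    refine hv.exists_perm_apply_eq σ.toRingHom.injective fun i => (hmem _).2 ?_
    rw [aeval_algHom_apply, (hmem _).1 ⟨i, rfl⟩, map_zero]
  have hcard : #P.roots.toFinset = #{i | π i = i} := by
    rw [roots, FiniteField.card_roots_toFinset_eq_card_filter_aroots (K := K)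
      (ne_zero_of_a_ne_zero ha), hroots, filter_image, card_image_of_injective _ hv]
    congr 1
    refine filter_congr fun i _ => ?_
    change σ (v i) = v i ↔ _
    rw [hπ, hv.eq_iff]
  have hV : (Matrix.vandermonde v).det = (s - r) * (t - r) * (t - s) := by
    simp [v, Matrix.det_vandermonde, Fin.prod_univ_succ, Fin.prod_Ioi_succ]
  have hsq : IsSquare P.discr ↔ Perm.sign π = 1 := by
    refine FiniteField.isSquare_iff_sign_eq_one hF hπ (c := P.a * P.a) hD ?_
    rw [discr_eq_prod_three_roots ha h3, hV, map_mul]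
    ring
  rw [hcard, hsq]
  exact Perm.card_fixed_fin_three π

end Cubic

/-- Let `p` be an odd prime and `a b c : ZMod p` with nonzero cubic discriminant
`D = 18abc − 4a³c + a²b² − 4b³ − 27c²`. Then the number `n` of roots of
`x³ + ax² + bx + c` in `ZMod p` lies in `{0, 1, 3}`, and `D` is a square in `ZMod p`
if and only if `n ≠ 1`. -/
theorem cubic_root_count_and_discriminant_square (p : ℕ) (hp : p.Prime) (hodd : p ≠ 2)
    (a b c : ZMod p)
    (hD : 18 * a * b * c - 4 * a ^ 3 * c + a ^ 2 * b ^ 2 - 4 * b ^ 3 - 27 * c ^ 2 ≠ 0) :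
    Nat.card {x : ZMod p // x ^ 3 + a * x ^ 2 + b * x + c = 0} ∈ ({0, 1, 3} : Set ℕ) ∧
    (IsSquare (18 * a * b * c - 4 * a ^ 3 * c + a ^ 2 * b ^ 2 - 4 * b ^ 3 - 27 * c ^ 2) ↔
      Nat.card {x : ZMod p // x ^ 3 + a * x ^ 2 + b * x + c = 0} ≠ 1) := by
  have := Fact.mk hp
  let P : Cubic (ZMod p) := ⟨1, a, b, c⟩
  have hdiscr : P.discr =
      18 * a * b * c - 4 * a ^ 3 * c + a ^ 2 * b ^ 2 - 4 * b ^ 3 - 27 * c ^ 2 := by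
    simp only [Cubic.discr, P]
    ring
  have hcard : Nat.card {x : ZMod p // x ^ 3 + a * x ^ 2 + b * x + c = 0} = #P.roots.toFinset := by
    rw [Nat.card_eq_fintype_card, Fintype.card_subtype]
    congr 1
    ext x
    simp [Cubic.mem_roots_iff (Cubic.ne_zero_of_a_ne_zero (P := P) one_ne_zero), P]
  rw [hcard, ← hdiscr]
  exact Cubic.card_roots_mem_and_isSquare_discr_iff (by rwa [ZMod.ringChar_zmod_n]) one_ne_zero
    (hdiscr ▸ hD)
end

section
/- Let Δ₊ and Δ₋ be coprime odd positive integers, let ε ∈ {1, −1}, and set Δ = ε·Δ₊·Δ₋. Let m be a positive squarefree integer with m ≡ 3 (mod 4) and gcd(m, Δ) = 1. Assume: (i) for every prime l dividing Δ₊, the Legendre symbol (m/l) = 1; (ii) for every prime q dividing Δ₋, the Legendre symbol (m/q) = −1. Then the Jacobi symbol (Δ/m) equals (−1)^{Ω(Δ₋)} if Δ ≡ 1 (mod 4), and equals (−1)^{Ω(Δ₋)+1} if Δ ≡ 3 (mod 4), where Ω(Δ₋) is the number of prime factors of Δ₋ counted with multiplicity. -/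
/-!
Since `m ≡ 3 (mod 4)`, quadratic reciprocity reads `(a/m) = χ₄(a) · (m/|a|)` for every odd
integer `a`, where `χ₄` is the nontrivial character mod `4` (the sign of a negative `a` is
absorbed by `(−1/m) = −1`). For `a = Δ` the factor `(m/Δ₊·Δ₋) = (m/Δ₊)(m/Δ₋)` is a product of
Legendre symbols prescribed by the hypotheses, giving `(−1)^{Ω(Δ₋)}`, and `χ₄(Δ) = ±1`
according to `Δ mod 4`.
-/

open NumberTheorySymbols ZMod

theorem jacobiSym_eq_pow_length_primeFactorsList {a : ℤ} {n : ℕ} {c : ℤ}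
    (h : ∀ p : ℕ, (hp : p.Prime) → p ∣ n → @legendreSym p ⟨hp⟩ a = c) :
    J(a | n) = c ^ n.primeFactorsList.length := by
  unfold jacobiSym
  rw [← List.length_pmap (f := fun p (pp : p.Prime) => @legendreSym p ⟨pp⟩ a)
    (H := fun _ => Nat.prime_of_mem_primeFactorsList)]
  refine List.prod_eq_pow_card _ c fun x hx => ?_
  obtain ⟨p, hmem, rfl⟩ := List.mem_pmap.mp hx
  exact h p (Nat.prime_of_mem_primeFactorsList hmem) (Nat.dvd_of_mem_primeFactorsList hmem)

theorem jacobiSym_natCast_eq_χ₄_mul_of_mod_four_eq_three {m n : ℕ} (hm : m % 4 = 3)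
    (hn : Odd n) :
    J(n | m) = χ₄ n * J(m | n) := by
  rcases Nat.odd_mod_four_iff.mp (Nat.odd_iff.mp hn) with hn1 | hn3
  · rw [χ₄_nat_one_mod_four hn1, one_mul,
      jacobiSym.quadratic_reciprocity_one_mod_four hn1 (Nat.odd_iff.mpr (by omega))]
  · rw [χ₄_nat_three_mod_four hn3, neg_one_mul,
      jacobiSym.quadratic_reciprocity_three_mod_four hn3 hm]

theorem jacobiSym_eq_χ₄_mul_of_mod_four_eq_three {m : ℕ} (hm : m % 4 = 3) {a : ℤ}
    (ha : Odd a) :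
    J(a | m) = χ₄ a * J(m | a.natAbs) := by
  obtain ⟨n, rfl | rfl⟩ : ∃ n : ℕ, a = n ∨ a = -n := ⟨_, Int.natAbs_eq a⟩
  · rw [Int.natAbs_natCast]
    exact jacobiSym_natCast_eq_χ₄_mul_of_mod_four_eq_three hm (Int.odd_coe_nat n |>.mp ha)
  · have hn : Odd n := Int.odd_coe_nat n |>.mp (odd_neg.mp ha)
    rw [Int.natAbs_neg, Int.natAbs_natCast,
      jacobiSym.neg _ (Nat.odd_iff.mpr (by omega)), χ₄_nat_three_mod_four hm,
      jacobiSym_natCast_eq_χ₄_mul_of_mod_four_eq_three hm hn, Int.cast_neg,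
      Int.cast_natCast, neg_eq_neg_one_mul (n : ZMod 4), map_mul, show χ₄ (-1) = -1 by decide]
    ring

theorem jacobiSym_eq_of_modified_heegner_three_mod_four_general
    (Δp Δm : ℕ) (hΔpodd : Odd Δp) (hΔmodd : Odd Δm)
    (ε : ℤ) (hε : ε = 1 ∨ ε = -1)
    (m : ℕ) (hm4 : m % 4 = 3)
    (hplus : ∀ l : ℕ, (hl : l.Prime) → l ∣ Δp → @legendreSym l ⟨hl⟩ (m : ℤ) = 1)
    (hminus : ∀ q : ℕ, (hq : q.Prime) → q ∣ Δm → @legendreSym q ⟨hq⟩ (m : ℤ) = -1) :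
    ((ε * Δp * Δm) ≡ 1 [ZMOD 4] →
      jacobiSym (ε * Δp * Δm) m = (-1) ^ Δm.primeFactorsList.length) ∧
    ((ε * Δp * Δm) ≡ 3 [ZMOD 4] →
      jacobiSym (ε * Δp * Δm) m = (-1) ^ (Δm.primeFactorsList.length + 1)) := by
  have hεodd : Odd ε := by rcases hε with rfl | rfl <;> decide
  have hΔodd : Odd (ε * Δp * Δm) := (hεodd.mul (Int.odd_coe_nat _ |>.mpr hΔpodd)).mul
    (Int.odd_coe_nat _ |>.mpr hΔmodd)
  have habs : (ε * Δp * Δm).natAbs = Δp * Δm := by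
    rcases hε with rfl | rfl <;> simp [Int.natAbs_mul]
  have hJ : J(m | Δp * Δm) = (-1) ^ Δm.primeFactorsList.length := by
    rw [jacobiSym.mul_right' _ hΔpodd.pos.ne' hΔmodd.pos.ne',
      jacobiSym_eq_pow_length_primeFactorsList hplus,
      jacobiSym_eq_pow_length_primeFactorsList hminus, one_pow, one_mul]
  rw [jacobiSym_eq_χ₄_mul_of_mod_four_eq_three hm4 hΔodd, habs, hJ]
  exact ⟨fun h1 => by rw [χ₄_int_one_mod_four h1, one_mul],
    fun h3 => by rw [χ₄_int_three_mod_four h3, pow_succ, neg_one_mul, mul_neg_one]⟩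

/-- Quadratic-reciprocity computation of the Jacobi symbol `(Δ/m)` for `Δ = ε·Δ₊·Δ₋` with
`Δ₊, Δ₋` odd, and `m ≡ 3 (mod 4)` squarefree, where `m` is a square mod every prime factor
of `Δ₊` and a non-square mod every prime factor of `Δ₋`. Then `(Δ/m) = (−1)^{Ω(Δ₋)}` if
`Δ ≡ 1 (mod 4)` and `(Δ/m) = (−1)^{Ω(Δ₋)+1}` if `Δ ≡ 3 (mod 4)`. -/
theorem jacobiSym_eq_of_modified_heegner_three_mod_four
    (Δp Δm : ℕ) (hΔp : 0 < Δp) (hΔm : 0 < Δm) (hΔpodd : Odd Δp) (hΔmodd : Odd Δm)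
    (hcop : Nat.Coprime Δp Δm)
    (ε : ℤ) (hε : ε = 1 ∨ ε = -1)
    (m : ℕ) (hm : 0 < m) (hsf : Squarefree m) (hm4 : m % 4 = 3)
    (hgcd : IsCoprime (m : ℤ) (ε * Δp * Δm))
    (hplus : ∀ l : ℕ, (hl : l.Prime) → l ∣ Δp → @legendreSym l ⟨hl⟩ (m : ℤ) = 1)
    (hminus : ∀ q : ℕ, (hq : q.Prime) → q ∣ Δm → @legendreSym q ⟨hq⟩ (m : ℤ) = -1) :
    ((ε * Δp * Δm) ≡ 1 [ZMOD 4] →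
      jacobiSym (ε * Δp * Δm) m = (-1) ^ Δm.primeFactorsList.length) ∧
    ((ε * Δp * Δm) ≡ 3 [ZMOD 4] →
      jacobiSym (ε * Δp * Δm) m = (-1) ^ (Δm.primeFactorsList.length + 1)) :=
  jacobiSym_eq_of_modified_heegner_three_mod_four_general Δp Δm hΔpodd hΔmodd ε hε m hm4 hplus
    hminus
end

section
/- Let Δ₊ and Δ₋ be coprime odd positive integers, let ε ∈ {1, −1}, and set Δ = ε·Δ₊·Δ₋. Let m be an odd positive squarefree integer with gcd(m, Δ) = 1. Assume: (i) for every prime l dividing Δ₊, the Legendre symbol (2m/l) = 1; (ii) for every prime q dividing Δ₋, the Legendre symbol (2m/q) = −1. Set b = Ω(Δ₋), the number of prime factors of Δ₋ counted with multiplicity. Then the Jacobi symbol (Δ/m) equals (−1)^b if either Δ ≡ 1 (mod 8), or Δ ≡ 3 (mod 8) and m ≡ 3 (mod 4), or Δ ≡ 7 (mod 8) and m ≡ 1 (mod 4); and (Δ/m) equals (−1)^{b+1} if either Δ ≡ 5 (mod 8), or Δ ≡ 3 (mod 8) and m ≡ 1 (mod 4), or Δ ≡ 7 (mod 8) and m ≡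 3 (mod 4). -/
/-! By quadratic reciprocity, `(Δ/m) = (χ₄(Δ)/m) · (m/|Δ|)`, and as `(2/n)² = 1` for odd `n`,
`(m/|Δ|) = χ₈(Δ) · (2m/Δ₊) · (2m/Δ₋) = χ₈(Δ) · (−1)^b` by the hypotheses on the prime factors of
`Δ₊` and `Δ₋`. The remaining sign `(χ₄(Δ)/m) · χ₈(Δ)` depends only on `Δ mod 8` and `m mod 4`. -/

open NumberTheorySymbols ZMod

lemma ZMod.χ₈_natAbs (a : ℤ) : χ₈ a.natAbs = χ₈ a := by
  rcases Int.natAbs_eq a with h | h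
  · rw [h, Int.natAbs_natCast, Int.cast_natCast]
  · rw [h, Int.natAbs_neg, Int.natAbs_natCast, Int.cast_neg, Int.cast_natCast, neg_eq_neg_one_mul,
      map_mul, show χ₈ (-1) = 1 from rfl, one_mul]

namespace jacobiSym

lemma eq_pow_length_primeFactorsList {a c : ℤ} {n : ℕ}
    (h : ∀ p : ℕ, (hp : p.Prime) → p ∣ n → @legendreSym p ⟨hp⟩ a = c) :
    J(a | n) = c ^ n.primeFactorsList.length := by
  rw [jacobiSym, ← List.length_pmap (f := fun p pp => @legendreSym p ⟨pp⟩ a)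
      (H := fun _ pf => Nat.prime_of_mem_primeFactorsList pf)]
  refine List.prod_eq_pow_card _ _ fun x hx => ?_
  obtain ⟨p, hp, rfl⟩ := List.mem_pmap.mp hx
  exact h p (Nat.prime_of_mem_primeFactorsList hp) (Nat.dvd_of_mem_primeFactorsList hp)

lemma eq_χ₈_mul_two_mul (a : ℤ) {n : ℕ} (hn : Odd n) :
    J(a | n) = χ₈ n * J(2 * a | n) := by
  have h2n : Int.gcd 2 n = 1 := by
    rw [← Nat.cast_ofNat, Int.gcd_natCast_natCast]
    exact hn.coprime_two_left
  rw [jacobiSym.mul_left, ← jacobiSym.at_two hn, ← mul_assoc, ← sq, jacobiSym.sq_one h2n,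
    one_mul]

lemma quadratic_reciprocity_int {a : ℤ} {b : ℕ} (ha : Odd a) (hb : Odd b) :
    J(a | b) = J(χ₄ a | b) * J(b | a.natAbs) := by
  have hN : Odd a.natAbs := Int.natAbs_odd.mpr ha
  have habs : J(a.natAbs | b) = J(χ₄ a.natAbs | b) * J(b | a.natAbs) := by
    rw [jacobiSym.quadratic_reciprocity' hN hb, qrSign.symm hb hN, qrSign]
  rcases Int.natAbs_eq a with h | h
  · rw [h, Int.natAbs_natCast, Int.cast_natCast]
    exact habs
  · have hχ₄ : χ₄ (-a.natAbs : ℤ) = -χ₄ a.natAbs := by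
      rw [Int.cast_neg, neg_eq_neg_one_mul, map_mul, Int.cast_natCast,
        show χ₄ (-1) = -1 from rfl, neg_one_mul]
    rw [h, Int.natAbs_neg, Int.natAbs_natCast, hχ₄, jacobiSym.neg _ hb, jacobiSym.neg _ hb, habs,
      mul_assoc]

lemma χ₄_left_mul_χ₈_eq_one {a : ℤ} {b : ℕ} (hb : Odd b)
    (h : a ≡ 1 [ZMOD 8] ∨ (a ≡ 3 [ZMOD 8] ∧ b % 4 = 3) ∨ (a ≡ 7 [ZMOD 8] ∧ b % 4 = 1)) :
    J(χ₄ a | b) * χ₈ a = 1 := by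
  rw [χ₈_int_mod_eight]
  rcases h with h | ⟨h, hb4⟩ | ⟨h, hb4⟩ <;> unfold Int.ModEq at h <;> rw [h]
  · rw [χ₄_int_one_mod_four (by omega), jacobiSym.one_left]
    rfl
  · rw [χ₄_int_three_mod_four (by omega), jacobiSym.at_neg_one hb, χ₄_nat_three_mod_four hb4]
    rfl
  · rw [χ₄_int_three_mod_four (by omega), jacobiSym.at_neg_one hb, χ₄_nat_one_mod_four hb4]
    rfl

lemma χ₄_left_mul_χ₈_eq_neg_one {a : ℤ} {b : ℕ} (hb : Odd b)
    (h : a ≡ 5 [ZMOD 8] ∨ (a ≡ 3 [ZMOD 8] ∧ b % 4 = 1) ∨ (a ≡ 7 [ZMOD 8] ∧ b % 4 = 3)) :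
    J(χ₄ a | b) * χ₈ a = -1 := by
  rw [χ₈_int_mod_eight]
  rcases h with h | ⟨h, hb4⟩ | ⟨h, hb4⟩ <;> unfold Int.ModEq at h <;> rw [h]
  · rw [χ₄_int_one_mod_four (by omega), jacobiSym.one_left]
    rfl
  · rw [χ₄_int_three_mod_four (by omega), jacobiSym.at_neg_one hb, χ₄_nat_one_mod_four hb4]
    rfl
  · rw [χ₄_int_three_mod_four (by omega), jacobiSym.at_neg_one hb, χ₄_nat_three_mod_four hb4]
    rfl

end jacobiSym

theorem jacobiSym_eq_of_modified_heegner_even_case_general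
    (Δp Δm : ℕ) (hΔpodd : Odd Δp) (hΔmodd : Odd Δm)
    (ε : ℤ) (hε : ε = 1 ∨ ε = -1)
    (m : ℕ) (hmodd : Odd m)
    (hplus : ∀ l : ℕ, (hl : l.Prime) → l ∣ Δp → @legendreSym l ⟨hl⟩ (2 * m : ℤ) = 1)
    (hminus : ∀ q : ℕ, (hq : q.Prime) → q ∣ Δm → @legendreSym q ⟨hq⟩ (2 * m : ℤ) = -1) :
    (((ε * Δp * Δm) ≡ 1 [ZMOD 8] ∨
        ((ε * Δp * Δm) ≡ 3 [ZMOD 8] ∧ m % 4 = 3) ∨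
        ((ε * Δp * Δm) ≡ 7 [ZMOD 8] ∧ m % 4 = 1)) →
      jacobiSym (ε * Δp * Δm) m = (-1) ^ Δm.primeFactorsList.length) ∧
    (((ε * Δp * Δm) ≡ 5 [ZMOD 8] ∨
        ((ε * Δp * Δm) ≡ 3 [ZMOD 8] ∧ m % 4 = 1) ∨
        ((ε * Δp * Δm) ≡ 7 [ZMOD 8] ∧ m % 4 = 3)) →
      jacobiSym (ε * Δp * Δm) m = (-1) ^ (Δm.primeFactorsList.length + 1)) := by
  set b := Δm.primeFactorsList.length
  have hεodd : Odd ε := by rcases hε with rfl | rfl <;> decide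
  have hΔodd : Odd (ε * Δp * Δm) := (hεodd.mul (Int.odd_coe_nat _ |>.mpr hΔpodd)).mul
    (Int.odd_coe_nat _ |>.mpr hΔmodd)
  have hnatAbs : (ε * Δp * Δm).natAbs = Δp * Δm := by
    rcases hε with rfl | rfl <;> simp [Int.natAbs_mul]
  have hJ : J(2 * m | Δp * Δm) = (-1) ^ b := by
    rw [jacobiSym.mul_right' _ hΔpodd.pos.ne' hΔmodd.pos.ne',
      jacobiSym.eq_pow_length_primeFactorsList hplus,
      jacobiSym.eq_pow_length_primeFactorsList hminus, one_pow, one_mul]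
  have key : J(ε * Δp * Δm | m) =
      J(χ₄ (ε * Δp * Δm : ℤ) | m) * χ₈ (ε * Δp * Δm : ℤ) * (-1) ^ b := by
    rw [jacobiSym.quadratic_reciprocity_int hΔodd hmodd,
      jacobiSym.eq_χ₈_mul_two_mul _ (Int.natAbs_odd.mpr hΔodd), χ₈_natAbs, hnatAbs, hJ, ← mul_assoc]
  refine ⟨fun h => ?_, fun h => ?_⟩
  · rw [key, jacobiSym.χ₄_left_mul_χ₈_eq_one hmodd h, one_mul]
  · rw [key, jacobiSym.χ₄_left_mul_χ₈_eq_neg_one hmodd h, pow_succ, mul_comm]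

/-- Quadratic-reciprocity computation of the Jacobi symbol `(Δ/m)` for `Δ = ε·Δ₊·Δ₋` with
`Δ₊, Δ₋` odd, and `m` odd positive squarefree, where `2m` is a square mod every prime
factor of `Δ₊` and a non-square mod every prime factor of `Δ₋`. With `b = Ω(Δ₋)`:
`(Δ/m) = (−1)^b` if `Δ ≡ 1 (mod 8)`, or `Δ ≡ 3 (mod 8)` and `m ≡ 3 (mod 4)`, or
`Δ ≡ 7 (mod 8)` and `m ≡ 1 (mod 4)`; and `(Δ/m) = (−1)^{b+1}` if `Δ ≡ 5 (mod 8)`, or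
`Δ ≡ 3 (mod 8)` and `m ≡ 1 (mod 4)`, or `Δ ≡ 7 (mod 8)` and `m ≡ 3 (mod 4)`. -/
theorem jacobiSym_eq_of_modified_heegner_even_case
    (Δp Δm : ℕ) (hΔp : 0 < Δp) (hΔm : 0 < Δm) (hΔpodd : Odd Δp) (hΔmodd : Odd Δm)
    (hcop : Nat.Coprime Δp Δm)
    (ε : ℤ) (hε : ε = 1 ∨ ε = -1)
    (m : ℕ) (hm : 0 < m) (hmodd : Odd m) (hsf : Squarefree m)
    (hgcd : IsCoprime (m : ℤ) (ε * Δp * Δm))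
    (hplus : ∀ l : ℕ, (hl : l.Prime) → l ∣ Δp → @legendreSym l ⟨hl⟩ (2 * m : ℤ) = 1)
    (hminus : ∀ q : ℕ, (hq : q.Prime) → q ∣ Δm → @legendreSym q ⟨hq⟩ (2 * m : ℤ) = -1) :
    (((ε * Δp * Δm) ≡ 1 [ZMOD 8] ∨
        ((ε * Δp * Δm) ≡ 3 [ZMOD 8] ∧ m % 4 = 3) ∨
        ((ε * Δp * Δm) ≡ 7 [ZMOD 8] ∧ m % 4 = 1)) →
      jacobiSym (ε * Δp * Δm) m = (-1) ^ Δm.primeFactorsList.length) ∧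
    (((ε * Δp * Δm) ≡ 5 [ZMOD 8] ∨
        ((ε * Δp * Δm) ≡ 3 [ZMOD 8] ∧ m % 4 = 1) ∨
        ((ε * Δp * Δm) ≡ 7 [ZMOD 8] ∧ m % 4 = 3)) →
      jacobiSym (ε * Δp * Δm) m = (-1) ^ (Δm.primeFactorsList.length + 1)) :=
  jacobiSym_eq_of_modified_heegner_even_case_general Δp Δm hΔpodd hΔmodd ε hε m hmodd hplus hminus
end
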